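/- Let 0 < α < 1 and C > 0, and define g on the open set where all logarithm arguments below are positive by g(x,y,z) = (2−2y−z) ln(√(1−α)/(1+Cα)) + (2x+z) ln(α√(C(1+C))/√(1−α)) − y ln(1+Cα) + ((1−y)/2) ln(1−y) + ((1−z)/2) ln(1−z) + ((1−y−z)/2) ln(1−y−z) − x ln x − (x+z) ln(x+z) − (1−x−z) ln(1−x−z) − (1−x−y−z) ln(1−x−y−z). Let x₀ = Cα/(1+Cα) and y₀ = 1/(1+C). Then g is differentiable on a neighborhood of (x₀, y₀, 0) in ℝ³, g(x₀, y₀, 0) = 0, and all three partial derivatives of g vanish at (x₀, y₀, 0); equivalently, the three expressions ln[α²C(1+C)(1−x−z)(1−x−y−z)/((1−α)x(x+z))], ln[(1+Cα)(1−x−y−z)/((1−α)√((1−y)(1−y−z)))] and ln[α√(C(1+C))(1+Cα)(1−x−z)(1−x−y−z)/((1−α)(x+z)√((1−z)(1−y−z)))], which give ∂g/∂x, ∂g/∂y and ∂g/∂z respectively, are all zero at (x₀, y₀, 0). -/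

import Mathlib

/-
In each partial derivative of `g` the constants `+1` produced by `(t log t)' = log t + 1`
cancel, so on the open set where all logarithms have positive arguments the partials are
exactly the three logarithms of the statement. At the critical point
`1 - x₀ = 1/(1+Cα)`, `1 - y₀ = C/(1+C)` and `1 - x₀ - y₀ = C(1-α)/((1+Cα)(1+C))`, so each of
those logarithms has argument `1`, and `g(x₀, y₀, 0)` becomes a combination of
`log α, log C, log (1-α), log (1+C), log (1+Cα)` whose coefficients all vanish.
-/

open Filter

/-- The exponent function `g(x,y,z)` governing the large-index asymptotics of the
matrix-basis propagator of the noncommutative Gross–Neveu model. -/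
noncomputable def gfun (C α x y z : ℝ) : ℝ :=
  (2 - 2 * y - z) * Real.log (Real.sqrt (1 - α) / (1 + C * α))
    + (2 * x + z) * Real.log (α * Real.sqrt (C * (1 + C)) / Real.sqrt (1 - α))
    - y * Real.log (1 + C * α)
    + (1 - y) / 2 * Real.log (1 - y)
    + (1 - z) / 2 * Real.log (1 - z)
    + (1 - y - z) / 2 * Real.log (1 - y - z)
    - x * Real.log x
    - (x + z) * Real.log (x + z)
    - (1 - x - z) * Real.log (1 - x - z)
    - (1 - x - y - z) * Real.log (1 - x - y - z)

open Real

theorem HasDerivAt.mul_log {f : ℝ → ℝ} {f' t : ℝ} (hf : HasDerivAt f f' t) (ht : f t ≠ 0) :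
    HasDerivAt (fun s => f s * Real.log (f s)) ((Real.log (f t) + 1) * f') t :=
  (hasDerivAt_mul_log ht).comp t hf

def gfunDomain : Set (ℝ × ℝ × ℝ) :=
  {p | 0 < 1 - p.2.1 ∧ 0 < 1 - p.2.2 ∧ 0 < 1 - p.2.1 - p.2.2 ∧ 0 < p.1 ∧ 0 < p.1 + p.2.2 ∧
    0 < 1 - p.1 - p.2.2 ∧ 0 < 1 - p.1 - p.2.1 - p.2.2}

theorem mem_gfunDomain {x y z : ℝ} :
    (x, y, z) ∈ gfunDomain ↔ 0 < 1 - y ∧ 0 < 1 - z ∧ 0 < 1 - y - z ∧ 0 < x ∧ 0 < x + z ∧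
      0 < 1 - x - z ∧ 0 < 1 - x - y - z :=
  Iff.rfl

theorem isOpen_gfunDomain : IsOpen gfunDomain := by
  simp only [gfunDomain, Set.ofPred_and]
  repeat' apply IsOpen.inter
  all_goals exact isOpen_lt continuous_const (by fun_prop)

theorem differentiableAt_gfun {C α : ℝ} {p : ℝ × ℝ × ℝ} (hp : p ∈ gfunDomain) :
    DifferentiableAt ℝ (fun q : ℝ × ℝ × ℝ => gfun C α q.1 q.2.1 q.2.2) p := by
  obtain ⟨_, _, _, _, _, _, _⟩ := hp
  unfold gfun
  fun_prop (disch := exact ne_of_gt ‹_›)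

noncomputable def gfunDx (C α x y z : ℝ) : ℝ :=
  log (α ^ 2 * C * (1 + C) * (1 - x - z) * (1 - x - y - z) / ((1 - α) * x * (x + z)))

noncomputable def gfunDy (C α x y z : ℝ) : ℝ :=
  log ((1 + C * α) * (1 - x - y - z) / ((1 - α) * √((1 - y) * (1 - y - z))))

noncomputable def gfunDz (C α x y z : ℝ) : ℝ :=
  log (α * √(C * (1 + C)) * (1 + C * α) * (1 - x - z) * (1 - x - y - z) /
    ((1 - α) * (x + z) * √((1 - z) * (1 - y - z))))

section PartialDerivatives

variable {C α x y z : ℝ}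

theorem hasDerivAt_gfun_x (hC : 0 < C) (hα0 : 0 < α) (hα1 : α < 1)
    (hp : (x, y, z) ∈ gfunDomain) :
    HasDerivAt (fun x => gfun C α x y z) (gfunDx C α x y z) x := by
  obtain ⟨-, -, -, hx, hxz, h1xz, h1xyz⟩ := mem_gfunDomain.1 hp
  have h1α : 0 < 1 - α := sub_pos.2 hα1
  unfold gfun
  refine (hasDerivAt_const x _
    |>.add ((((hasDerivAt_id x).const_mul 2).add_const z).mul_const _)
    |>.sub (hasDerivAt_const x _) |>.add (hasDerivAt_const x _) |>.add (hasDerivAt_const x _)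
    |>.add (hasDerivAt_const x _)
    |>.sub ((hasDerivAt_id x).mul_log hx.ne')
    |>.sub (((hasDerivAt_id x).add_const z).mul_log hxz.ne')
    |>.sub ((((hasDerivAt_id x).const_sub 1).sub_const z).mul_log h1xz.ne')
    |>.sub (((((hasDerivAt_id x).const_sub 1).sub_const y).sub_const z).mul_log h1xyz.ne')
    |>.congr_deriv ?_)
  simp (disch := positivity) only [gfunDx, log_div, log_mul, log_pow, log_sqrt, id]
  ring

theorem hasDerivAt_gfun_y (hC : 0 < C) (hα0 : 0 < α) (hα1 : α < 1)
    (hp : (x, y, z) ∈ gfunDomain) :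
    HasDerivAt (fun y => gfun C α x y z) (gfunDy C α x y z) y := by
  obtain ⟨h1y, -, h1yz, -, -, -, h1xyz⟩ := mem_gfunDomain.1 hp
  have h1α : 0 < 1 - α := sub_pos.2 hα1
  unfold gfun
  refine (((hasDerivAt_id y).const_mul 2).const_sub 2 |>.sub_const z |>.mul_const _
    |>.add (hasDerivAt_const y _) |>.sub ((hasDerivAt_id y).mul_const _)
    |>.add ((((hasDerivAt_id y).const_sub 1).div_const 2).mul
      (((hasDerivAt_id y).const_sub 1).log h1y.ne'))
    |>.add (hasDerivAt_const y _)
    |>.add (((((hasDerivAt_id y).const_sub 1).sub_const z).div_const 2).mul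
      ((((hasDerivAt_id y).const_sub 1).sub_const z).log h1yz.ne'))
    |>.sub (hasDerivAt_const y _) |>.sub (hasDerivAt_const y _) |>.sub (hasDerivAt_const y _)
    |>.sub ((((hasDerivAt_id y).const_sub (1 - x)).sub_const z).mul_log h1xyz.ne')
    |>.congr_deriv ?_)
  simp (disch := positivity) only [gfunDy, log_div, log_mul, log_sqrt, id]
  field_simp
  ring

theorem hasDerivAt_gfun_z (hC : 0 < C) (hα0 : 0 < α) (hα1 : α < 1)
    (hp : (x, y, z) ∈ gfunDomain) :
    HasDerivAt (fun z => gfun C α x y z) (gfunDz C α x y z) z := by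
  obtain ⟨-, h1z, h1yz, -, hxz, h1xz, h1xyz⟩ := mem_gfunDomain.1 hp
  have h1α : 0 < 1 - α := sub_pos.2 hα1
  unfold gfun
  refine ((hasDerivAt_id z).const_sub (2 - 2 * y) |>.mul_const _
    |>.add (((hasDerivAt_id z).const_add (2 * x)).mul_const _)
    |>.sub (hasDerivAt_const z _) |>.add (hasDerivAt_const z _)
    |>.add ((((hasDerivAt_id z).const_sub 1).div_const 2).mul
      (((hasDerivAt_id z).const_sub 1).log h1z.ne'))
    |>.add ((((hasDerivAt_id z).const_sub (1 - y)).div_const 2).mul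
      (((hasDerivAt_id z).const_sub (1 - y)).log h1yz.ne'))
    |>.sub (hasDerivAt_const z _)
    |>.sub (((hasDerivAt_id z).const_add x).mul_log hxz.ne')
    |>.sub (((hasDerivAt_id z).const_sub (1 - x)).mul_log h1xz.ne')
    |>.sub (((hasDerivAt_id z).const_sub (1 - x - y)).mul_log h1xyz.ne')
    |>.congr_deriv ?_)
  simp (disch := positivity) only [gfunDz, log_div, log_mul, log_sqrt, id]
  field_simp
  ring

end PartialDerivatives

section CriticalPoint

variable {C α : ℝ}

local notation "x₀" => C * α / (1 + C * α)
local notation "y₀" => 1 / (1 + C)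

theorem one_sub_critX (h : 1 + C * α ≠ 0) : 1 - x₀ = (1 + C * α)⁻¹ := by
  field_simp; ring

theorem one_sub_critY (h : 1 + C ≠ 0) : 1 - y₀ = C / (1 + C) := by
  field_simp; ring

theorem one_sub_critX_sub_critY (h₁ : 1 + C * α ≠ 0) (h₂ : 1 + C ≠ 0) :
    1 - x₀ - y₀ = C * (1 - α) / ((1 + C * α) * (1 + C)) := by
  field_simp; ring

theorem critical_mem_gfunDomain (hC : 0 < C) (hα0 : 0 < α) (hα1 : α < 1) :
    (x₀, y₀, 0) ∈ gfunDomain := by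
  have h1α : 0 < 1 - α := sub_pos.2 hα1
  have hCα : 0 < 1 + C * α := by positivity
  have h1C : 0 < 1 + C := by positivity
  simp only [mem_gfunDomain, sub_zero, add_zero]
  rw [one_sub_critX_sub_critY hCα.ne' h1C.ne', one_sub_critX hCα.ne', one_sub_critY h1C.ne']
  refine ⟨?_, ?_, ?_, ?_, ?_, ?_, ?_⟩ <;> positivity

theorem gfun_critical (hC : 0 < C) (hα0 : 0 < α) (hα1 : α < 1) : gfun C α x₀ y₀ 0 = 0 := by
  have h1α : 0 < 1 - α := sub_pos.2 hα1
  have hCα : 0 < 1 + C * α := by positivity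
  have h1C : 0 < 1 + C := by positivity
  simp only [gfun, sub_zero, add_zero, log_one, mul_zero]
  rw [one_sub_critX_sub_critY hCα.ne' h1C.ne', one_sub_critX hCα.ne', one_sub_critY h1C.ne']
  simp (disch := positivity) only [log_div, log_mul, log_inv, log_sqrt]
  field_simp
  ring

theorem gfunDx_critical (hC : 0 < C) (hα0 : 0 < α) (hα1 : α < 1) : gfunDx C α x₀ y₀ 0 = 0 := by
  have h1α : 0 < 1 - α := sub_pos.2 hα1
  refine (congrArg log ?_).trans log_one
  field_simp
  ring

theorem gfunDy_critical (hC : 0 < C) (hα0 : 0 < α) (hα1 : α < 1) : gfunDy C α x₀ y₀ 0 = 0 := by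
  have h1α : 0 < 1 - α := sub_pos.2 hα1
  have h1C : 0 < 1 + C := by positivity
  rw [gfunDy, sub_zero, sub_zero, one_sub_critY h1C.ne', sqrt_mul_self (by positivity)]
  refine (congrArg log ?_).trans log_one
  field_simp
  ring

theorem gfunDz_critical (hC : 0 < C) (hα0 : 0 < α) (hα1 : α < 1) : gfunDz C α x₀ y₀ 0 = 0 := by
  have h1α : 0 < 1 - α := sub_pos.2 hα1
  have h1C : 0 < 1 + C := by positivity
  have hsqrt : √(C * (1 + C)) = (1 + C) * √(C / (1 + C)) := by
    rw [← sqrt_sq h1C.le, ← sqrt_mul (sq_nonneg _), sqrt_sq h1C.le]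
    field_simp
  simp only [gfunDz, sub_zero, add_zero, one_mul]
  rw [one_sub_critY h1C.ne', hsqrt]
  refine (congrArg log ?_).trans log_one
  field_simp
  ring

end CriticalPoint

/-- `g` is differentiable near the critical point
`(x₀, y₀, 0) = (Cα/(1+Cα), 1/(1+C), 0)`, vanishes there together with its three partial
derivatives, and the three explicit logarithmic expressions giving `∂g/∂x`, `∂g/∂y`,
`∂g/∂z` vanish there. -/
theorem stmt15 (C α : ℝ) (hC : 0 < C) (hα0 : 0 < α) (hα1 : α < 1)
    (x₀ y₀ : ℝ) (hx₀ : x₀ = C * α / (1 + C * α)) (hy₀ : y₀ = 1 / (1 + C)) :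
    (∀ᶠ p : ℝ × ℝ × ℝ in nhds (x₀, y₀, 0),
        DifferentiableAt ℝ (fun q : ℝ × ℝ × ℝ => gfun C α q.1 q.2.1 q.2.2) p)
    ∧ gfun C α x₀ y₀ 0 = 0
    ∧ deriv (fun x => gfun C α x y₀ 0) x₀ = 0
    ∧ deriv (fun y => gfun C α x₀ y 0) y₀ = 0
    ∧ deriv (fun z => gfun C α x₀ y₀ z) 0 = 0
    ∧ Real.log (α ^ 2 * C * (1 + C) * (1 - x₀ - 0) * (1 - x₀ - y₀ - 0) /
        ((1 - α) * x₀ * (x₀ + 0))) = 0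
    ∧ Real.log ((1 + C * α) * (1 - x₀ - y₀ - 0) /
        ((1 - α) * Real.sqrt ((1 - y₀) * (1 - y₀ - 0)))) = 0
    ∧ Real.log (α * Real.sqrt (C * (1 + C)) * (1 + C * α) * (1 - x₀ - 0) *
          (1 - x₀ - y₀ - 0) /
        ((1 - α) * (x₀ + 0) * Real.sqrt ((1 - 0) * (1 - y₀ - 0)))) = 0 := by
  subst hx₀ hy₀
  have hmem := critical_mem_gfunDomain hC hα0 hα1
  refine ⟨?_, gfun_critical hC hα0 hα1, ?_, ?_, ?_, gfunDx_critical hC hα0 hα1,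
    gfunDy_critical hC hα0 hα1, gfunDz_critical hC hα0 hα1⟩
  · filter_upwards [isOpen_gfunDomain.mem_nhds hmem] with p hp using differentiableAt_gfun hp
  · exact (hasDerivAt_gfun_x hC hα0 hα1 hmem).deriv.trans (gfunDx_critical hC hα0 hα1)
  · exact (hasDerivAt_gfun_y hC hα0 hα1 hmem).deriv.trans (gfunDy_critical hC hα0 hα1)
  · exact (hasDerivAt_gfun_z hC hα0 hα1 hmem).deriv.trans (gfunDz_critical hC hα0 hα1)
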